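/- arXiv:2103.09266 — 4 statements merged into one kernel-verified Lean document; each statement's English description precedes it below -/
import Mathlib

section
/- For every t ∈ ℝ the one-sided derivatives p'₋(t) and p'₊(t) of the polar parameterization exist, and the set {t ∈ ℝ : p'₋(t) ≠ p'₊(t)} is at most countable. -/
/-!
Write `p = ‖q‖⁻¹ • q` with `q t = cos t • e₁ + sin t • e₂`, a smooth curve that never vanishes.
Near `t`, `‖q x‖` differs by `o(x - t)` from the convex function `x ↦ ‖q t + (x - t) • q' t‖`,
so it inherits the one-sided derivatives of that function, and hence so does `p`. A kink of `p`
is a kink of `‖q‖`, and a real function has only countably many points where its one-sided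
derivatives exist and differ: if `f'₋(t) < r < f'₊(t)` with `r` rational, then on some interval
with rational endpoints the line of slope `r` through `(t, f t)` lies strictly below the graph
except at `t`, and a line of given slope does this at no more than one point of an interval.
-/

open Set Filter Topology

theorem subsingleton_setOf_forall_mul_sub_lt_sub (f : ℝ → ℝ) (r : ℝ) (I : Set ℝ) :
    {t ∈ I | ∀ x ∈ I, x ≠ t → r * (x - t) < f x - f t}.Subsingleton := by
  rintro t ⟨ht, hft⟩ t' ⟨ht', hft'⟩
  by_contra hne
  linarith [hft t' ht' (Ne.symm hne), hft' t ht hne]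

theorem HasDerivWithinAt.eventually_mul_sub_lt_sub_Iio {f : ℝ → ℝ} {a r t : ℝ}
    (hf : HasDerivWithinAt f a (Iio t) t) (hr : a < r) :
    ∀ᶠ x in 𝓝[<] t, r * (x - t) < f x - f t := by
  rw [hasDerivWithinAt_iff_tendsto_slope' self_notMem_Iio] at hf
  filter_upwards [(tendsto_order.1 hf).2 r hr, self_mem_nhdsWithin] with x hslope hx
  rw [slope_def_field, div_lt_iff_of_neg (sub_neg.2 hx)] at hslope
  exact hslope

theorem HasDerivWithinAt.eventually_mul_sub_lt_sub_Ioi {f : ℝ → ℝ} {b r t : ℝ}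
    (hf : HasDerivWithinAt f b (Ioi t) t) (hr : r < b) :
    ∀ᶠ x in 𝓝[>] t, r * (x - t) < f x - f t := by
  rw [hasDerivWithinAt_iff_tendsto_slope' self_notMem_Ioi] at hf
  filter_upwards [(tendsto_order.1 hf).1 r hr, self_mem_nhdsWithin] with x hslope hx
  rw [slope_def_field, lt_div_iff₀ (sub_pos.2 hx)] at hslope
  exact hslope

theorem countable_setOf_hasDerivWithinAt_Iio_lt_Ioi (f : ℝ → ℝ) :
    {t | ∃ a b, a < b ∧ HasDerivWithinAt f a (Iio t) t ∧
      HasDerivWithinAt f b (Ioi t) t}.Countable := by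
  refine Countable.mono (fun t ht => ?_) <| countable_iUnion fun r : ℚ =>
    countable_iUnion fun l : ℚ => countable_iUnion fun u : ℚ =>
      (subsingleton_setOf_forall_mul_sub_lt_sub f r (Ioo l u)).countable
  obtain ⟨a, b, hab, ha, hb⟩ := ht
  obtain ⟨r, har, hrb⟩ := exists_rat_btwn hab
  have hev : ∀ᶠ x in 𝓝[≠] t, r * (x - t) < f x - f t := by
    rw [← nhdsLT_sup_nhdsGT]
    exact eventually_sup.2
      ⟨ha.eventually_mul_sub_lt_sub_Iio har, hb.eventually_mul_sub_lt_sub_Ioi hrb⟩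
  obtain ⟨l, u, ⟨hlt, htu⟩, hsub⟩ :=
    mem_nhds_iff_exists_Ioo_subset.1 (eventually_nhdsWithin_iff.1 hev)
  obtain ⟨l', hll', hl't⟩ := exists_rat_btwn hlt
  obtain ⟨u', htu', hu'u⟩ := exists_rat_btwn htu
  simp only [mem_iUnion]
  exact ⟨r, l', u', ⟨hl't, htu'⟩, fun x hx hxt => hsub ⟨hll'.trans hx.1, hx.2.trans hu'u⟩ hxt⟩

theorem countable_setOf_derivWithin_Iic_ne_Ici {f : ℝ → ℝ}
    (hL : ∀ t, DifferentiableWithinAt ℝ f (Iic t) t)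
    (hR : ∀ t, DifferentiableWithinAt ℝ f (Ici t) t) :
    {t | derivWithin f (Iic t) t ≠ derivWithin f (Ici t) t}.Countable := by
  have hLo : ∀ t, HasDerivWithinAt f (derivWithin f (Iic t) t) (Iio t) t :=
    fun t => (hL t).hasDerivWithinAt.Iio_of_Iic
  have hRo : ∀ t, HasDerivWithinAt f (derivWithin f (Ici t) t) (Ioi t) t :=
    fun t => (hR t).hasDerivWithinAt.Ioi_of_Ici
  refine ((countable_setOf_hasDerivWithinAt_Iio_lt_Ioi f).union
    (countable_setOf_hasDerivWithinAt_Iio_lt_Ioi (-f))).mono fun t ht => ?_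
  rcases lt_or_gt_of_ne ht with hlt | hgt
  · exact Or.inl ⟨_, _, hlt, hLo t, hRo t⟩
  · exact Or.inr ⟨_, _, neg_lt_neg hgt, (hLo t).neg, (hRo t).neg⟩

section LipschitzConvex

variable {E : Type*} [NormedAddCommGroup E] [NormedSpace ℝ E] {φ : E → ℝ} {K : NNReal}
  {γ : ℝ → E} {t : ℝ}

theorem LipschitzWith.hasDerivWithinAt_comp_of_tangent (hφ : LipschitzWith K φ) {v : E}
    {s : Set ℝ} {d : ℝ} (hγ : HasDerivAt γ v t)
    (h : HasDerivWithinAt (fun x => φ (γ t + (x - t) • v)) d s t) :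
    HasDerivWithinAt (fun x => φ (γ x)) d s t := by
  rw [hasDerivWithinAt_iff_isLittleO] at h ⊢
  rw [hasDerivAt_iff_isLittleO] at hγ
  have hclose : (fun x => φ (γ x) - φ (γ t + (x - t) • v)) =O[𝓝[s] t]
      fun x => γ x - γ t - (x - t) • v := by
    refine Asymptotics.IsBigO.of_bound K (Eventually.of_forall fun x => ?_)
    rw [Real.norm_eq_abs, ← Real.dist_eq, sub_sub, ← dist_eq_norm]
    exact hφ.dist_le_mul _ _
  refine ((hclose.trans_isLittleO (hγ.mono nhdsWithin_le_nhds)).add h).congr_left fun x => ?_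
  simp only [sub_self, zero_smul, add_zero]
  ring

theorem ConvexOn.comp_add_sub_smul (hφ : ConvexOn ℝ univ φ) (w v : E) (t : ℝ) :
    ConvexOn ℝ univ fun x : ℝ => φ (w + (x - t) • v) := by
  have hline : (fun x : ℝ => φ (w + (x - t) • v))
      = φ ∘ AffineMap.lineMap (w - t • v) (w - t • v + v) := funext fun x => by
    rw [Function.comp_apply, AffineMap.lineMap_apply_module']
    congr 1
    module
  rw [hline, ← preimage_univ]
  exact hφ.comp_affineMap _

theorem LipschitzWith.differentiableWithinAt_Ici_comp (hφ : LipschitzWith K φ)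
    (hφc : ConvexOn ℝ univ φ) (hγ : DifferentiableAt ℝ γ t) :
    DifferentiableWithinAt ℝ (fun x => φ (γ x)) (Ici t) t :=
  (hφ.hasDerivWithinAt_comp_of_tangent hγ.hasDerivAt
    ((hφc.comp_add_sub_smul _ _ t).hasDerivWithinAt_rightDeriv_of_mem_interior
      (by simp)).Ici_of_Ioi).differentiableWithinAt

theorem LipschitzWith.differentiableWithinAt_Iic_comp (hφ : LipschitzWith K φ)
    (hφc : ConvexOn ℝ univ φ) (hγ : DifferentiableAt ℝ γ t) :
    DifferentiableWithinAt ℝ (fun x => φ (γ x)) (Iic t) t :=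
  (hφ.hasDerivWithinAt_comp_of_tangent hγ.hasDerivAt
    ((hφc.comp_add_sub_smul _ _ t).hasDerivWithinAt_leftDeriv_of_mem_interior
      (by simp)).Iic_of_Iio).differentiableWithinAt

end LipschitzConvex

theorem polar_parameterization_one_sided_derivs_general
    {X : Type*} [NormedAddCommGroup X] [NormedSpace ℝ X]
    (e₁ e₂ : X) (hInd : LinearIndependent ℝ ![e₁, e₂])
    (p : ℝ → X)
    (hp : ∀ t, p t = ‖Real.cos t • e₁ + Real.sin t • e₂‖⁻¹ •
      (Real.cos t • e₁ + Real.sin t • e₂)) :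
    (∀ t : ℝ, (∃ d : X, HasDerivWithinAt p d (Iic t) t) ∧
      (∃ d : X, HasDerivWithinAt p d (Ici t) t)) ∧
    {t : ℝ | derivWithin p (Iic t) t ≠ derivWithin p (Ici t) t}.Countable := by
  set q : ℝ → X := fun t => Real.cos t • e₁ + Real.sin t • e₂
  have hq : ∀ t, HasDerivAt q (-Real.sin t • e₁ + Real.cos t • e₂) t := fun t =>
    ((Real.hasDerivAt_cos t).smul_const e₁).add ((Real.hasDerivAt_sin t).smul_const e₂)
  have hq0 : ∀ t, ‖q t‖ ≠ 0 := fun t => norm_ne_zero_iff.2 fun h0 => by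
    obtain ⟨h1, h2⟩ := LinearIndependent.pair_iff.1 hInd _ _ h0
    simpa [h1, h2] using Real.sin_sq_add_cos_sq t
  have hNL t := lipschitzWith_one_norm.differentiableWithinAt_Iic_comp convexOn_univ_norm
    (hq t).differentiableAt
  have hNR t := lipschitzWith_one_norm.differentiableWithinAt_Ici_comp convexOn_univ_norm
    (hq t).differentiableAt
  obtain rfl : p = fun t => ‖q t‖⁻¹ • q t := funext hp
  have hderiv {s : Set ℝ} {t : ℝ} (hs : UniqueDiffWithinAt ℝ s t)
      (hN : DifferentiableWithinAt ℝ (‖q ·‖) s t) :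
      derivWithin (fun t => ‖q t‖⁻¹ • q t) s t = ‖q t‖⁻¹ • (-Real.sin t • e₁ + Real.cos t • e₂)
        + (-derivWithin (‖q ·‖) s t / ‖q t‖ ^ 2) • q t :=
    ((hN.hasDerivWithinAt.inv (hq0 t)).smul (hq t).hasDerivWithinAt).derivWithin hs
  refine ⟨fun t => ⟨?_, ?_⟩, ?_⟩
  · exact ⟨_, ((hNL t).inv (hq0 t)).smul (hq t).differentiableAt.differentiableWithinAt
      |>.hasDerivWithinAt⟩
  · exact ⟨_, ((hNR t).inv (hq0 t)).smul (hq t).differentiableAt.differentiableWithinAt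
      |>.hasDerivWithinAt⟩
  · refine (countable_setOf_derivWithin_Iic_ne_Ici hNL hNR).mono fun t => mt fun hN => ?_
    rw [hderiv (uniqueDiffWithinAt_Iic t) (hNL t), hderiv (uniqueDiffWithinAt_Ici t) (hNR t), hN]

/-- For the polar parameterization `p` of the unit sphere of a 2-dimensional real Banach
space, the one-sided derivatives `p'₋(t)` and `p'₊(t)` exist at every `t ∈ ℝ`, and the set
of points where they differ is at most countable. -/
theorem polar_parameterization_one_sided_derivs
    {X : Type*} [NormedAddCommGroup X] [NormedSpace ℝ X] [CompleteSpace X]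
    (hdim : Module.finrank ℝ X = 2)
    (e₁ e₂ : X) (hInd : LinearIndependent ℝ ![e₁, e₂])
    (p : ℝ → X)
    (hp : ∀ t, p t = ‖Real.cos t • e₁ + Real.sin t • e₂‖⁻¹ •
      (Real.cos t • e₁ + Real.sin t • e₂)) :
    (∀ t : ℝ, (∃ d : X, HasDerivWithinAt p d (Iic t) t) ∧
      (∃ d : X, HasDerivWithinAt p d (Ici t) t)) ∧
    {t : ℝ | derivWithin p (Iic t) t ≠ derivWithin p (Ici t) t}.Countable :=
  polar_parameterization_one_sided_derivs_general e₁ e₂ hInd p hp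
end

section
/- For all t, ε ∈ ℝ, the polar parameterization satisfies (c/C)·|sin(ε)| ≤ ‖p(t+ε) − p(t)‖ ≤ (2C²/c²)·|ε|. -/
/-!
Identify `ℝ²` with `ℂ` through `L z = z.re • e₁ + z.im • e₂`, so that `e^{it} = L (exp (t i))`.
Writing `z = ‖z‖ exp (arg z · i)` gives `c ‖z‖ ≤ ‖L z‖ ≤ C ‖z‖`, and `p s - p t = L w` with
`w = ‖e^{is}‖⁻¹ exp (s i) - ‖e^{it}‖⁻¹ exp (t i)`. After rotating by `exp (-t i)`, the imaginary
part of `w` is `‖e^{is}‖⁻¹ sin (s - t)`, which gives the lower bound. For the upper bound,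
normalising is `2/‖y‖`-Lipschitz at `y`, and chords of the unit circle are shorter than arcs.
-/

open Complex

section Normalization

variable {X : Type*} [NormedAddCommGroup X] [NormedSpace ℝ X]

theorem norm_inv_norm_smul_sub_inv_norm_smul_le (x : X) {y : X} (hy : y ≠ 0) :
    ‖‖x‖⁻¹ • x - ‖y‖⁻¹ • y‖ ≤ 2 * ‖x - y‖ / ‖y‖ := by
  have hsplit : ‖x‖⁻¹ • x - ‖y‖⁻¹ • y =
      ‖y‖⁻¹ • (x - y) + (‖y‖⁻¹ * (‖y‖ - ‖x‖)) • (‖x‖⁻¹ • x) := by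
    rcases eq_or_ne x 0 with rfl | hx
    · simp
    · have hx' : ‖x‖ ≠ 0 := norm_ne_zero_iff.2 hx
      rw [smul_smul, show ‖y‖⁻¹ * (‖y‖ - ‖x‖) * ‖x‖⁻¹ = ‖x‖⁻¹ - ‖y‖⁻¹ by field_simp,
        sub_smul, smul_sub]
      abel
  have hunit : ‖‖x‖⁻¹ • x‖ ≤ 1 := by
    rw [norm_smul, norm_inv, norm_norm]
    exact inv_mul_le_one_of_le₀ le_rfl (norm_nonneg x)
  calc ‖‖x‖⁻¹ • x - ‖y‖⁻¹ • y‖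
      ≤ ‖y‖⁻¹ * ‖x - y‖ + ‖y‖⁻¹ * |‖y‖ - ‖x‖| * ‖‖x‖⁻¹ • x‖ := by
        rw [hsplit]
        refine (norm_add_le _ _).trans_eq ?_
        rw [norm_smul, norm_smul, norm_mul, norm_inv, norm_norm, Real.norm_eq_abs]
    _ ≤ ‖y‖⁻¹ * ‖x - y‖ + ‖y‖⁻¹ * ‖x - y‖ * 1 := by
        gcongr
        rw [abs_sub_comm]
        exact abs_norm_sub_norm_le x y
    _ = 2 * ‖x - y‖ / ‖y‖ := by ring

end Normalization

theorem norm_exp_mul_I_sub_exp_mul_I_le (s t : ℝ) :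
    ‖exp (s * I) - exp (t * I)‖ ≤ |s - t| := by
  have h : exp (s * I) - exp (t * I) = exp (t * I) * (exp (I * ↑(s - t)) - 1) := by
    rw [mul_sub, mul_one, ← Complex.exp_add]; push_cast; ring_nf
  rw [h, norm_mul, norm_exp_ofReal_mul_I, one_mul, ← Real.norm_eq_abs]
  exact Real.norm_exp_I_mul_ofReal_sub_one_le

theorem abs_mul_abs_sin_sub_le_norm_smul_exp_sub_smul_exp (a b s t : ℝ) :
    |a| * |Real.sin (s - t)| ≤ ‖a • exp (s * I) - b • exp (t * I)‖ := by
  have h : a • exp (s * I) - b • exp (t * I) =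
      exp (t * I) * (a * exp ((s - t : ℝ) * I) - b) := by
    rw [real_smul, real_smul, mul_sub, ← mul_assoc, mul_comm _ (a : ℂ), mul_assoc,
      ← Complex.exp_add]
    push_cast; ring_nf
  rw [h, norm_mul, norm_exp_ofReal_mul_I, one_mul, ← abs_mul]
  refine le_of_eq_of_le ?_ (abs_im_le_norm _)
  rw [sub_im, ofReal_im, sub_zero, im_ofReal_mul, exp_ofReal_mul_I_im]

section LinearCombinationReIm

variable {X : Type*} [NormedAddCommGroup X] [NormedSpace ℝ X] (e₁ e₂ : X)

@[simps]
def linearCombinationReIm : ℂ →ₗ[ℝ] X where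
  toFun z := z.re • e₁ + z.im • e₂
  map_add' z w := by simp only [add_re, add_im, add_smul]; abel
  map_smul' r z := by simp [smul_add, smul_smul]

theorem linearCombinationReIm_exp_mul_I (t : ℝ) :
    linearCombinationReIm e₁ e₂ (exp (t * I)) = Real.cos t • e₁ + Real.sin t • e₂ := by
  simp [exp_ofReal_mul_I_re, exp_ofReal_mul_I_im]

theorem linearCombinationReIm_ne_zero {e₁ e₂ : X} (h : LinearIndependent ℝ ![e₁, e₂]) {z : ℂ}
    (hz : z ≠ 0) : linearCombinationReIm e₁ e₂ z ≠ 0 := by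
  intro h0
  obtain ⟨hre, him⟩ := LinearIndependent.pair_iff.1 h _ _ h0
  exact hz (Complex.ext hre him)

theorem exists_norm_linearCombinationReIm_eq (z : ℂ) : ∃ θ : ℝ,
    ‖linearCombinationReIm e₁ e₂ z‖ = ‖z‖ * ‖Real.cos θ • e₁ + Real.sin θ • e₂‖ := by
  refine ⟨z.arg, ?_⟩
  conv_lhs =>
    rw [← norm_mul_exp_arg_mul_I z, ← real_smul, map_smul, linearCombinationReIm_exp_mul_I]
  rw [norm_smul, norm_norm]

variable {e₁ e₂}

theorem mul_norm_le_norm_linearCombinationReIm {c : ℝ}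
    (hc : ∀ t, c ≤ ‖Real.cos t • e₁ + Real.sin t • e₂‖) (z : ℂ) :
    c * ‖z‖ ≤ ‖linearCombinationReIm e₁ e₂ z‖ := by
  obtain ⟨θ, hθ⟩ := exists_norm_linearCombinationReIm_eq e₁ e₂ z
  rw [hθ, mul_comm c]
  exact mul_le_mul_of_nonneg_left (hc θ) (norm_nonneg z)

theorem norm_linearCombinationReIm_le_mul_norm {C : ℝ}
    (hC : ∀ t, ‖Real.cos t • e₁ + Real.sin t • e₂‖ ≤ C) (z : ℂ) :
    ‖linearCombinationReIm e₁ e₂ z‖ ≤ C * ‖z‖ := by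
  obtain ⟨θ, hθ⟩ := exists_norm_linearCombinationReIm_eq e₁ e₂ z
  rw [hθ, mul_comm C]
  exact mul_le_mul_of_nonneg_left (hC θ) (norm_nonneg z)

end LinearCombinationReIm

section PolarParam

variable {X : Type*} [NormedAddCommGroup X] [NormedSpace ℝ X] {e₁ e₂ : X} {c C : ℝ}

variable (e₁ e₂) in
noncomputable def polarParam (t : ℝ) : X :=
  ‖Real.cos t • e₁ + Real.sin t • e₂‖⁻¹ • (Real.cos t • e₁ + Real.sin t • e₂)

theorem div_mul_abs_sin_sub_le_norm_polarParam_sub (hc0 : 0 < c)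
    (hc : ∀ t, c ≤ ‖Real.cos t • e₁ + Real.sin t • e₂‖)
    (hC : ∀ t, ‖Real.cos t • e₁ + Real.sin t • e₂‖ ≤ C) (s t : ℝ) :
    c / C * |Real.sin (s - t)| ≤ ‖polarParam e₁ e₂ s - polarParam e₁ e₂ t‖ := by
  set L := linearCombinationReIm e₁ e₂
  set Ns := ‖Real.cos s • e₁ + Real.sin s • e₂‖
  set Nt := ‖Real.cos t • e₁ + Real.sin t • e₂‖
  calc c / C * |Real.sin (s - t)| ≤ c * (|Ns⁻¹| * |Real.sin (s - t)|) := by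
        rw [abs_inv, abs_norm, div_mul_eq_mul_div, mul_div_assoc, ← div_eq_inv_mul]
        gcongr
        · exact hc0.trans_le (hc s)
        · exact hC s
    _ ≤ c * ‖Ns⁻¹ • exp (s * I) - Nt⁻¹ • exp (t * I)‖ := by
        gcongr
        exact abs_mul_abs_sin_sub_le_norm_smul_exp_sub_smul_exp _ _ _ _
    _ ≤ ‖L (Ns⁻¹ • exp (s * I) - Nt⁻¹ • exp (t * I))‖ :=
        mul_norm_le_norm_linearCombinationReIm hc _
    _ = ‖polarParam e₁ e₂ s - polarParam e₁ e₂ t‖ := by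
        simp only [map_sub, map_smul, L, linearCombinationReIm_exp_mul_I, polarParam, Ns, Nt]

theorem norm_polarParam_sub_le (hc0 : 0 < c)
    (hc : ∀ t, c ≤ ‖Real.cos t • e₁ + Real.sin t • e₂‖)
    (hC : ∀ t, ‖Real.cos t • e₁ + Real.sin t • e₂‖ ≤ C) (s t : ℝ) :
    ‖polarParam e₁ e₂ s - polarParam e₁ e₂ t‖ ≤ 2 * C ^ 2 / c ^ 2 * |s - t| := by
  have hcC : c ≤ C := (hc 0).trans (hC 0)
  have hC0 : 0 ≤ C := hc0.le.trans hcC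
  calc ‖polarParam e₁ e₂ s - polarParam e₁ e₂ t‖
      ≤ 2 * ‖(Real.cos s • e₁ + Real.sin s • e₂) - (Real.cos t • e₁ + Real.sin t • e₂)‖ /
          ‖Real.cos t • e₁ + Real.sin t • e₂‖ :=
        norm_inv_norm_smul_sub_inv_norm_smul_le _ (norm_pos_iff.1 (hc0.trans_le (hc t)))
    _ = 2 * ‖linearCombinationReIm e₁ e₂ (exp (s * I) - exp (t * I))‖ /
          ‖Real.cos t • e₁ + Real.sin t • e₂‖ := by
        rw [map_sub, linearCombinationReIm_exp_mul_I, linearCombinationReIm_exp_mul_I]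
    _ ≤ 2 * (C * |s - t|) / c := by
        gcongr
        · exact (norm_linearCombinationReIm_le_mul_norm hC _).trans <|
            mul_le_mul_of_nonneg_left (norm_exp_mul_I_sub_exp_mul_I_le s t) hC0
        · exact hc t
    _ = 2 * (C * |s - t|) / c * 1 := (mul_one _).symm
    _ ≤ 2 * (C * |s - t|) / c * (C / c) :=
        mul_le_mul_of_nonneg_left ((one_le_div hc0).2 hcC)
          (div_nonneg (mul_nonneg zero_le_two (mul_nonneg hC0 (abs_nonneg _))) hc0.le)
    _ = 2 * C ^ 2 / c ^ 2 * |s - t| := by ring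

theorem cos_smul_add_sin_smul_ne_zero (h : LinearIndependent ℝ ![e₁, e₂]) (t : ℝ) :
    Real.cos t • e₁ + Real.sin t • e₂ ≠ 0 := by
  rw [← linearCombinationReIm_exp_mul_I]
  exact linearCombinationReIm_ne_zero h (exp_ne_zero _)

end PolarParam

theorem polar_parameterization_bilipschitz_bounds_general
    {X : Type*} [NormedAddCommGroup X] [NormedSpace ℝ X]
    (e₁ e₂ : X) (hInd : LinearIndependent ℝ ![e₁, e₂])
    (p : ℝ → X)
    (hp : ∀ t, p t = ‖Real.cos t • e₁ + Real.sin t • e₂‖⁻¹ •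
      (Real.cos t • e₁ + Real.sin t • e₂))
    (c C : ℝ)
    (hc : IsLeast (Set.range fun t : ℝ => ‖Real.cos t • e₁ + Real.sin t • e₂‖) c)
    (hC : IsGreatest (Set.range fun t : ℝ => ‖Real.cos t • e₁ + Real.sin t • e₂‖) C) :
    ∀ t ε : ℝ, c / C * |Real.sin ε| ≤ ‖p (t + ε) - p t‖ ∧
      ‖p (t + ε) - p t‖ ≤ 2 * C ^ 2 / c ^ 2 * |ε| := by
  obtain rfl : p = polarParam e₁ e₂ := funext hp
  have hc_le : ∀ t, c ≤ ‖Real.cos t • e₁ + Real.sin t • e₂‖ := fun t => hc.2 ⟨t, rfl⟩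
  have hle_C : ∀ t, ‖Real.cos t • e₁ + Real.sin t • e₂‖ ≤ C := fun t => hC.2 ⟨t, rfl⟩
  have hc0 : 0 < c := by
    obtain ⟨t₀, rfl⟩ := hc.1
    exact norm_pos_iff.2 (cos_smul_add_sin_smul_ne_zero hInd t₀)
  intro t ε
  simpa only [add_sub_cancel_left] using
    And.intro (div_mul_abs_sin_sub_le_norm_polarParam_sub hc0 hc_le hle_C (t + ε) t)
      (norm_polarParam_sub_le hc0 hc_le hle_C (t + ε) t)

/-- For the polar parameterization `p` of the unit sphere of a 2-dimensional real Banach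
space, with `c = min ‖e^{it}‖` and `C = max ‖e^{it}‖`, one has
`(c/C)·|sin ε| ≤ ‖p (t+ε) - p t‖ ≤ (2C²/c²)·|ε|` for all `t, ε ∈ ℝ`. -/
theorem polar_parameterization_bilipschitz_bounds
    {X : Type*} [NormedAddCommGroup X] [NormedSpace ℝ X] [CompleteSpace X]
    (hdim : Module.finrank ℝ X = 2)
    (e₁ e₂ : X) (hInd : LinearIndependent ℝ ![e₁, e₂])
    (p : ℝ → X)
    (hp : ∀ t, p t = ‖Real.cos t • e₁ + Real.sin t • e₂‖⁻¹ •
      (Real.cos t • e₁ + Real.sin t • e₂))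
    (c C : ℝ)
    (hc : IsLeast (Set.range fun t : ℝ => ‖Real.cos t • e₁ + Real.sin t • e₂‖) c)
    (hC : IsGreatest (Set.range fun t : ℝ => ‖Real.cos t • e₁ + Real.sin t • e₂‖) C) :
    ∀ t ε : ℝ, c / C * |Real.sin ε| ≤ ‖p (t + ε) - p t‖ ∧
      ‖p (t + ε) - p t‖ ≤ 2 * C ^ 2 / c ^ 2 * |ε| :=
  polar_parameterization_bilipschitz_bounds_general e₁ e₂ hInd p hp c C hc hC
end

section
/- For every t ∈ ℝ the one-sided derivatives p'₋(t) and p'₊(t) of the polar parameterization exist and satisfy c/C ≤ min{‖p'₋(t)‖, ‖p'₊(t)‖} ≤ max{‖p'₋(t)‖, ‖p'₊(t)‖} ≤ 2C²/c². -/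
/-!
Write `γ t = cos t • e₁ + sin t • e₂`, so `γ' t = γ (t + π/2)` and `p = ‖γ‖⁻¹ • γ`.
Along the tangent line `s ↦ γ t + (s - t) • γ' t` the norm is convex and `‖γ' t‖`-Lipschitz,
hence has one-sided derivatives `d` with `|d| ≤ C`; since the norm is Lipschitz and the line is
tangent to `γ`, these are also the one-sided derivatives of `‖γ‖`. The quotient rule gives
`p'± = ‖γ t‖⁻¹ • γ (t + π/2) - (d / ‖γ t‖²) • γ t`, of norm at most `2C/c ≤ 2C²/c²`.
For the lower bound, the addition formulas show that `k • γ t + a • γ (t + π/2)` is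
`‖(k, a)‖ • γ (t + θ)` for some `θ`, so its norm is at least `c |a|`; here `a = ‖γ t‖⁻¹ ≥ 1/C`.
-/

open Set Filter Asymptotics Topology

open scoped NNReal

theorem HasDerivWithinAt.norm_le_of_lipschitzWith {F : Type*} [NormedAddCommGroup F]
    [NormedSpace ℝ F] {f : ℝ → F} {K : ℝ≥0} (hf : LipschitzWith K f) {f' : F} {s : Set ℝ}
    {x : ℝ} (h : HasDerivWithinAt f f' s x) (hx : x ∉ s) [(𝓝[s] x).NeBot] : ‖f'‖ ≤ K := by
  have hslope : ∀ y, ‖slope f x y‖ ≤ K := fun y => by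
    rw [slope_def_module, norm_smul, norm_inv, ← dist_eq_norm, ← dist_eq_norm, dist_comm y]
    rcases eq_or_ne (dist x y) 0 with hxy | hxy
    · simp [hxy]
    · exact inv_mul_le_of_le_mul₀ dist_nonneg K.2
        (by simpa [dist_comm, mul_comm] using hf.dist_le_mul y x)
  exact le_of_tendsto ((hasDerivWithinAt_iff_tendsto_slope' hx).1 h).norm
    (Eventually.of_forall hslope)

section ConvexLipschitz

variable {g : ℝ → ℝ} {K : ℝ≥0}

theorem ConvexOn.exists_hasDerivWithinAt_Ici (hg : ConvexOn ℝ univ g) (hL : LipschitzWith K g)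
    (t : ℝ) : ∃ d : ℝ, |d| ≤ K ∧ HasDerivWithinAt g d (Ici t) t := by
  have h := hg.hasDerivWithinAt_rightDeriv_of_mem_interior (x := t) (by simp)
  exact ⟨_, h.norm_le_of_lipschitzWith hL (lt_irrefl t), h.Ici_of_Ioi⟩

theorem ConvexOn.exists_hasDerivWithinAt_Iic (hg : ConvexOn ℝ univ g) (hL : LipschitzWith K g)
    (t : ℝ) : ∃ d : ℝ, |d| ≤ K ∧ HasDerivWithinAt g d (Iic t) t := by
  have h := hg.hasDerivWithinAt_leftDeriv_of_mem_interior (x := t) (by simp)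
  exact ⟨_, h.norm_le_of_lipschitzWith hL (lt_irrefl t), h.Iic_of_Iio⟩

end ConvexLipschitz

section NormedSpace

variable {X F : Type*} [NormedAddCommGroup X] [NormedSpace ℝ X] [NormedAddCommGroup F]
  [NormedSpace ℝ F]

theorem convexOn_norm_add_smul (x w : X) (t : ℝ) :
    ConvexOn ℝ univ fun s : ℝ => ‖x + (s - t) • w‖ := by
  refine ((convexOn_norm convex_univ).comp_affineMap
    (AffineMap.lineMap (x - t • w) (x - t • w + w) : ℝ →ᵃ[ℝ] X)).congr fun s _ => ?_
  simp only [Function.comp_apply, AffineMap.lineMap_apply_module]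
  congr 1
  module

theorem lipschitzWith_norm_add_smul (x w : X) (t : ℝ) :
    LipschitzWith ‖w‖₊ fun s : ℝ => ‖x + (s - t) • w‖ := by
  refine LipschitzWith.of_dist_le_mul fun s s' => ?_
  refine (dist_norm_norm_le _ _).trans_eq ?_
  rw [dist_eq_norm, add_sub_add_left_eq_sub, ← sub_smul, norm_smul,
    sub_sub_sub_cancel_right, mul_comm, coe_nnnorm, Real.norm_eq_abs]

theorem LipschitzWith.hasDerivWithinAt_comp_of_tangentLine {f : X → F} {K : ℝ≥0}
    (hf : LipschitzWith K f) {v : ℝ → X} {w : X} {t : ℝ} (hv : HasDerivAt v w t) {d : F}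
    {S : Set ℝ} (hd : HasDerivWithinAt (fun s => f (v t + (s - t) • w)) d S t) :
    HasDerivWithinAt (fun u => f (v u)) d S t := by
  rw [hasDerivWithinAt_iff_isLittleO] at hd ⊢
  have hcurve : (fun u => f (v u) - f (v t + (u - t) • w)) =o[𝓝[S] t] fun u => u - t := by
    refine (isBigO_of_le' (c := K) _ fun u => ?_).trans_isLittleO
      ((hasDerivAt_iff_isLittleO.1 hv).mono nhdsWithin_le_nhds)
    rw [← dist_eq_norm, sub_sub, ← dist_eq_norm]
    exact hf.dist_le_mul _ _
  refine (hd.add hcurve).congr' (Eventually.of_forall fun u => ?_) EventuallyEq.rfl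
  simp only [sub_self, zero_smul, add_zero]
  abel

variable {v : ℝ → X} {w : X} {t : ℝ}

theorem HasDerivAt.exists_hasDerivWithinAt_Ici_norm (hv : HasDerivAt v w t) :
    ∃ d : ℝ, |d| ≤ ‖w‖ ∧ HasDerivWithinAt (fun u => ‖v u‖) d (Ici t) t := by
  obtain ⟨d, hd, hline⟩ := (convexOn_norm_add_smul (v t) w t).exists_hasDerivWithinAt_Ici
    (lipschitzWith_norm_add_smul (v t) w t) t
  exact ⟨d, hd, lipschitzWith_one_norm.hasDerivWithinAt_comp_of_tangentLine hv hline⟩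

theorem HasDerivAt.exists_hasDerivWithinAt_Iic_norm (hv : HasDerivAt v w t) :
    ∃ d : ℝ, |d| ≤ ‖w‖ ∧ HasDerivWithinAt (fun u => ‖v u‖) d (Iic t) t := by
  obtain ⟨d, hd, hline⟩ := (convexOn_norm_add_smul (v t) w t).exists_hasDerivWithinAt_Iic
    (lipschitzWith_norm_add_smul (v t) w t) t
  exact ⟨d, hd, lipschitzWith_one_norm.hasDerivWithinAt_comp_of_tangentLine hv hline⟩

theorem HasDerivWithinAt.inv_norm_smul {S : Set ℝ} {d : ℝ}
    (hN : HasDerivWithinAt (fun u => ‖v u‖) d S t) (hv : HasDerivWithinAt v w S t)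
    (h0 : v t ≠ 0) :
    HasDerivWithinAt (fun u => ‖v u‖⁻¹ • v u) (‖v t‖⁻¹ • w - (d / ‖v t‖ ^ 2) • v t) S t := by
  refine ((hN.inv (norm_ne_zero_iff.2 h0)).smul hv).congr_deriv ?_
  simp only [Pi.inv_apply, neg_div, neg_smul]
  abel

end NormedSpace

section PolarCurve

variable {X : Type*} [NormedAddCommGroup X] [NormedSpace ℝ X]

open Real

noncomputable def polarCurve (e₁ e₂ : X) (t : ℝ) : X := cos t • e₁ + sin t • e₂

variable {e₁ e₂ : X}

theorem hasDerivAt_polarCurve (e₁ e₂ : X) (t : ℝ) :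
    HasDerivAt (polarCurve e₁ e₂) (polarCurve e₁ e₂ (t + π / 2)) t := by
  refine (((hasDerivAt_cos t).smul_const e₁).add ((hasDerivAt_sin t).smul_const e₂)).congr_deriv ?_
  simp [polarCurve, cos_add_pi_div_two, sin_add_pi_div_two]

theorem polarCurve_add (e₁ e₂ : X) (t θ : ℝ) :
    polarCurve e₁ e₂ (t + θ) =
      cos θ • polarCurve e₁ e₂ t + sin θ • polarCurve e₁ e₂ (t + π / 2) := by
  simp only [polarCurve, cos_add, sin_add, cos_pi_div_two, sin_pi_div_two]
  module

theorem polarCurve_ne_zero (hInd : LinearIndependent ℝ ![e₁, e₂]) (t : ℝ) :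
    polarCurve e₁ e₂ t ≠ 0 := by
  intro h
  obtain ⟨hcos, hsin⟩ := LinearIndependent.pair_iff.1 hInd _ _ h
  simpa [hcos, hsin] using sin_sq_add_cos_sq t

theorem mul_abs_le_norm_smul_polarCurve_add_smul {c : ℝ} (hc0 : 0 ≤ c)
    (hc : ∀ u, c ≤ ‖polarCurve e₁ e₂ u‖) (k a t : ℝ) :
    c * |a| ≤ ‖k • polarCurve e₁ e₂ t + a • polarCurve e₁ e₂ (t + π / 2)‖ := by
  set z : ℂ := ⟨k, a⟩
  have hrot : k • polarCurve e₁ e₂ t + a • polarCurve e₁ e₂ (t + π / 2) =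
      ‖z‖ • polarCurve e₁ e₂ (t + z.arg) := by
    rw [polarCurve_add e₁ e₂ t z.arg, smul_add, smul_smul, smul_smul, Complex.norm_mul_cos_arg,
      Complex.norm_mul_sin_arg]
  rw [hrot, norm_smul, norm_norm, mul_comm]
  exact mul_le_mul (Complex.abs_im_le_norm z) (hc _) hc0 (norm_nonneg z)

variable {c C : ℝ}

theorem div_le_norm_of_polarCurve_bounds (hc0 : 0 < c) (hc : ∀ u, c ≤ ‖polarCurve e₁ e₂ u‖)
    (hC : ∀ u, ‖polarCurve e₁ e₂ u‖ ≤ C) (k t : ℝ) :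
    c / C ≤ ‖k • polarCurve e₁ e₂ t + ‖polarCurve e₁ e₂ t‖⁻¹ • polarCurve e₁ e₂ (t + π / 2)‖ := by
  have hr : 0 < ‖polarCurve e₁ e₂ t‖ := hc0.trans_le (hc t)
  calc c / C ≤ c * |‖polarCurve e₁ e₂ t‖⁻¹| := by
        rw [abs_of_pos (inv_pos.2 hr), div_eq_mul_inv]
        gcongr
        exact hC t
    _ ≤ _ := mul_abs_le_norm_smul_polarCurve_add_smul hc0.le hc k _ t

theorem norm_le_of_polarCurve_bounds (hc0 : 0 < c) (hc : ∀ u, c ≤ ‖polarCurve e₁ e₂ u‖)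
    (hC : ∀ u, ‖polarCurve e₁ e₂ u‖ ≤ C) {d : ℝ} (hd : |d| ≤ C) (t : ℝ) :
    ‖‖polarCurve e₁ e₂ t‖⁻¹ • polarCurve e₁ e₂ (t + π / 2) -
      (d / ‖polarCurve e₁ e₂ t‖ ^ 2) • polarCurve e₁ e₂ t‖ ≤ 2 * C ^ 2 / c ^ 2 := by
  set r := ‖polarCurve e₁ e₂ t‖
  have hr : 0 < r := hc0.trans_le (hc t)
  have hcC : c ≤ C := (hc t).trans (hC t)
  have hC0 : 0 < C := hc0.trans_le hcC
  calc _ ≤ r⁻¹ * ‖polarCurve e₁ e₂ (t + π / 2)‖ + |d| / r ^ 2 * r := by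
        refine (norm_sub_le _ _).trans_eq ?_
        rw [norm_smul, norm_smul, norm_inv, norm_norm, Real.norm_eq_abs, abs_div,
          abs_of_pos (pow_pos hr 2)]
    _ ≤ r⁻¹ * C + C / r ^ 2 * r := by gcongr; exact hC _
    _ = 2 * C / r := by field_simp; ring
    _ ≤ 2 * C / c := div_le_div_of_nonneg_left (by positivity) hc0 (hc t)
    _ ≤ 2 * C ^ 2 / c ^ 2 := by
        rw [div_le_div_iff₀ hc0 (pow_pos hc0 2)]
        nlinarith [mul_le_mul_of_nonneg_left hcC (by positivity : 0 ≤ 2 * C * c)]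

theorem exists_hasDerivWithinAt_inv_norm_smul_polarCurve (hc0 : 0 < c)
    (hc : ∀ u, c ≤ ‖polarCurve e₁ e₂ u‖) (hC : ∀ u, ‖polarCurve e₁ e₂ u‖ ≤ C) {S : Set ℝ}
    {t d : ℝ} (hd : |d| ≤ C) (hN : HasDerivWithinAt (fun u => ‖polarCurve e₁ e₂ u‖) d S t) :
    ∃ D, HasDerivWithinAt (fun u => ‖polarCurve e₁ e₂ u‖⁻¹ • polarCurve e₁ e₂ u) D S t ∧
      c / C ≤ ‖D‖ ∧ ‖D‖ ≤ 2 * C ^ 2 / c ^ 2 := by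
  have h0 : polarCurve e₁ e₂ t ≠ 0 := norm_pos_iff.1 (hc0.trans_le (hc t))
  refine ⟨_, hN.inv_norm_smul (hasDerivAt_polarCurve e₁ e₂ t).hasDerivWithinAt h0, ?_,
    norm_le_of_polarCurve_bounds hc0 hc hC hd t⟩
  convert div_le_norm_of_polarCurve_bounds hc0 hc hC (-(d / ‖polarCurve e₁ e₂ t‖ ^ 2)) t using 2
  rw [neg_smul, sub_eq_add_neg, add_comm]

end PolarCurve

theorem polar_parameterization_deriv_bounds_general
    {X : Type*} [NormedAddCommGroup X] [NormedSpace ℝ X]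
    (e₁ e₂ : X) (hInd : LinearIndependent ℝ ![e₁, e₂])
    (p : ℝ → X)
    (hp : ∀ t, p t = ‖Real.cos t • e₁ + Real.sin t • e₂‖⁻¹ •
      (Real.cos t • e₁ + Real.sin t • e₂))
    (c C : ℝ)
    (hc : IsLeast (Set.range fun t : ℝ => ‖Real.cos t • e₁ + Real.sin t • e₂‖) c)
    (hC : IsGreatest (Set.range fun t : ℝ => ‖Real.cos t • e₁ + Real.sin t • e₂‖) C) :
    ∀ t : ℝ, ∃ dm dp : X, HasDerivWithinAt p dm (Iic t) t ∧ HasDerivWithinAt p dp (Ici t) t ∧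
      c / C ≤ min ‖dm‖ ‖dp‖ ∧ max ‖dm‖ ‖dp‖ ≤ 2 * C ^ 2 / c ^ 2 := by
  intro t
  obtain rfl : p = fun u => ‖polarCurve e₁ e₂ u‖⁻¹ • polarCurve e₁ e₂ u := funext hp
  have hcu : ∀ u, c ≤ ‖polarCurve e₁ e₂ u‖ := fun u => hc.2 ⟨u, rfl⟩
  have hCu : ∀ u, ‖polarCurve e₁ e₂ u‖ ≤ C := fun u => hC.2 ⟨u, rfl⟩
  have hc0 : 0 < c := by
    obtain ⟨u, rfl⟩ := hc.1
    exact norm_pos_iff.2 (polarCurve_ne_zero hInd u)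
  have hv := hasDerivAt_polarCurve e₁ e₂ t
  obtain ⟨dm, hdm, hNm⟩ := hv.exists_hasDerivWithinAt_Iic_norm
  obtain ⟨dp, hdp, hNp⟩ := hv.exists_hasDerivWithinAt_Ici_norm
  obtain ⟨Dm, hDm, hDm_ge, hDm_le⟩ :=
    exists_hasDerivWithinAt_inv_norm_smul_polarCurve hc0 hcu hCu (hdm.trans (hCu _)) hNm
  obtain ⟨Dp, hDp, hDp_ge, hDp_le⟩ :=
    exists_hasDerivWithinAt_inv_norm_smul_polarCurve hc0 hcu hCu (hdp.trans (hCu _)) hNp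
  exact ⟨Dm, Dp, hDm, hDp, le_min hDm_ge hDp_ge, max_le hDm_le hDp_le⟩

/-- For the polar parameterization `p` of the unit sphere of a 2-dimensional real Banach
space, with `c = min ‖e^{it}‖` and `C = max ‖e^{it}‖`, the one-sided derivatives exist
at every point and satisfy `c/C ≤ min{‖p'₋(t)‖, ‖p'₊(t)‖} ≤ max{‖p'₋(t)‖, ‖p'₊(t)‖} ≤ 2C²/c²`. -/
theorem polar_parameterization_deriv_bounds
    {X : Type*} [NormedAddCommGroup X] [NormedSpace ℝ X] [CompleteSpace X]
    (hdim : Module.finrank ℝ X = 2)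
    (e₁ e₂ : X) (hInd : LinearIndependent ℝ ![e₁, e₂])
    (p : ℝ → X)
    (hp : ∀ t, p t = ‖Real.cos t • e₁ + Real.sin t • e₂‖⁻¹ •
      (Real.cos t • e₁ + Real.sin t • e₂))
    (c C : ℝ)
    (hc : IsLeast (Set.range fun t : ℝ => ‖Real.cos t • e₁ + Real.sin t • e₂‖) c)
    (hC : IsGreatest (Set.range fun t : ℝ => ‖Real.cos t • e₁ + Real.sin t • e₂‖) C) :
    ∀ t : ℝ, ∃ dm dp : X, HasDerivWithinAt p dm (Iic t) t ∧ HasDerivWithinAt p dp (Ici t) t ∧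
      c / C ≤ min ‖dm‖ ‖dp‖ ∧ max ‖dm‖ ‖dp‖ ≤ 2 * C ^ 2 / c ^ 2 :=
  polar_parameterization_deriv_bounds_general e₁ e₂ hInd p hp c C hc hC
end

section
/- If the unit sphere of a strictly convex 2-dimensional real Banach space X contains two linearly independent special points, then S_X contains two special points x, y such that the pair (x, y) is regular. -/
open Metric Set

/-- A real Banach space is *strictly convex* if every convex subset of its unit sphere
contains at most one point. -/
def StrictlyConvexSphere (X : Type*) [NormedAddCommGroup X] [NormedSpace ℝ X] : Prop :=
  ∀ s : Set X, s ⊆ sphere (0 : X) 1 → Convex ℝ s → s.Subsingleton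

/-- A point `x` of the unit sphere of `X` is *special* if for every real Banach space `Y`,
every surjective isometry `f : S_X → S_Y`, and all `y, z ∈ S_X` with `y - z = ‖y - z‖ • x`,
one has `f y - f z = ‖y - z‖ • f x`. -/
def IsSpecialPoint {X : Type*} [NormedAddCommGroup X] [NormedSpace ℝ X]
    (x : sphere (0 : X) 1) : Prop :=
  ∀ (Y : Type*) [NormedAddCommGroup Y] [NormedSpace ℝ Y] [CompleteSpace Y],
    ∀ f : sphere (0 : X) 1 → sphere (0 : Y) 1, Isometry f → Function.Surjective f →
      ∀ y z : sphere (0 : X) 1, (y : X) - (z : X) = ‖(y : X) - (z : X)‖ • (x : X) →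
        (f y : Y) - (f z : Y) = ‖(y : X) - (z : X)‖ • (f x : Y)

/-- A pair `(x, y)` of points of the unit sphere is *singular* if
`{x, -x} ∩ {y, -y} ≠ ∅` or there is `z ∈ S_X` with
`S_X ∩ (z + ℝ·x) = {z} = S_X ∩ (z + ℝ·y)`. -/
def SingularPair {X : Type*} [NormedAddCommGroup X] [NormedSpace ℝ X] (x y : X) : Prop :=
  (({x, -x} : Set X) ∩ ({y, -y} : Set X)).Nonempty ∨
    ∃ z ∈ sphere (0 : X) 1,
      sphere (0 : X) 1 ∩ {w : X | ∃ t : ℝ, w = z + t • x} = {z} ∧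
      sphere (0 : X) 1 ∩ {w : X | ∃ t : ℝ, w = z + t • y} = {z}

/-!
If `(u, v)` is singular, linear independence leaves only the second alternative: there is `z`
such that the lines `z + ℝu` and `z + ℝv` meet the sphere only at `z`. Then `(u, z)` is regular,
and `z` is special. Indeed, given a surjective isometry `f : S_X → S_Y`, let `A` be the linear map
with `A u = f u` and `A v = f v`. Specialness of `u` and `v` makes `f - A` constant along chords
of directions `u` and `v`, and in two dimensions these chords link every point of `S_X` other
than `-z` to `z`, and every point other than `z` to `-z`. Hence `f = A` on `S_X`.
-/

section

variable {X : Type*} [NormedAddCommGroup X] [NormedSpace ℝ X]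

theorem exists_pos_norm_add_smul_eq_one {m d : X} (hm : ‖m‖ < 1) (hd : d ≠ 0) :
    ∃ s : ℝ, 0 < s ∧ ‖m + s • d‖ = 1 := by
  set T : ℝ := (1 + ‖m‖) / ‖d‖
  have hT : 0 < T := by positivity
  have hT_ge : 1 ≤ ‖m + T • d‖ := by
    have hTd : ‖T • d‖ = 1 + ‖m‖ := by
      rw [norm_smul, Real.norm_of_nonneg hT.le, div_mul_cancel₀ _ (norm_ne_zero_iff.mpr hd)]
    have := norm_sub_le (m + T • d) m
    rw [add_sub_cancel_left] at this
    linarith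
  obtain ⟨s, ⟨hs0, -⟩, hs⟩ := intermediate_value_Icc hT.le (by fun_prop :
    ContinuousOn (fun s : ℝ => ‖m + s • d‖) (Icc 0 T)) ⟨by simpa using hm.le, hT_ge⟩
  refine ⟨s, hs0.lt_of_ne ?_, hs⟩
  rintro rfl
  simp only [zero_smul, add_zero] at hs
  linarith

theorem exists_one_lt_norm_add_smul_sub_eq_one {z m : X} (hz : ‖z‖ = 1) (hm : ‖m‖ < 1) :
    ∃ s : ℝ, 1 < s ∧ ‖z + s • (m - z)‖ = 1 := by
  have hmz : m - z ≠ 0 := sub_ne_zero.mpr (by rintro rfl; linarith)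
  obtain ⟨s, hs, hs1⟩ := exists_pos_norm_add_smul_eq_one hm hmz
  exact ⟨1 + s, by linarith, by rwa [show z + (1 + s) • (m - z) = m + s • (m - z) by module]⟩

theorem convex_setOf_exists_eq_add_smul (z d : X) :
    Convex ℝ {w : X | ∃ t : ℝ, w = z + t • d} := by
  rintro _ ⟨s, rfl⟩ _ ⟨t, rfl⟩ a b - - hab
  refine ⟨a * s + b * t, ?_⟩
  rw [show a • (z + s • d) + b • (z + t • d) = (a + b) • z + (a * s + b * t) • d by module,
    hab, one_smul]

def IsTangentLine (z d : X) : Prop :=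
  sphere (0 : X) 1 ∩ {w : X | ∃ t : ℝ, w = z + t • d} = {z}

theorem isTangentLine_iff {z d : X} :
    IsTangentLine z d ↔
      z ∈ sphere (0 : X) 1 ∧ ∀ t : ℝ, z + t • d ∈ sphere (0 : X) 1 → t • d = 0 := by
  constructor
  · intro h
    have hz : z ∈ sphere (0 : X) 1 ∩ {w : X | ∃ t : ℝ, w = z + t • d} := h ▸ rfl
    refine ⟨hz.1, fun t ht => ?_⟩
    have : z + t • d ∈ ({z} : Set X) := h ▸ ⟨ht, t, rfl⟩
    simpa using this
  · rintro ⟨hz, H⟩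
    ext w
    constructor
    · rintro ⟨hw, t, rfl⟩
      simp [H t hw]
    · rintro rfl
      exact ⟨hz, 0, by simp⟩

namespace IsTangentLine

variable {z d : X}

theorem mem_sphere (h : IsTangentLine z d) : z ∈ sphere (0 : X) 1 :=
  (isTangentLine_iff.mp h).1

theorem norm_eq_one (h : IsTangentLine z d) : ‖z‖ = 1 :=
  mem_sphere_zero_iff_norm.mp h.mem_sphere

theorem smul_eq_zero_of_mem_sphere (h : IsTangentLine z d) {t : ℝ}
    (ht : z + t • d ∈ sphere (0 : X) 1) : t • d = 0 :=
  (isTangentLine_iff.mp h).2 t ht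

theorem neg (h : IsTangentLine z d) : IsTangentLine (-z) d := by
  refine isTangentLine_iff.mpr ⟨by simpa using h.mem_sphere, fun t ht => ?_⟩
  have : z + (-t) • d ∈ sphere (0 : X) 1 := by
    rwa [show z + (-t) • d = -(-z + t • d) by module, mem_sphere_zero_iff_norm, norm_neg,
      ← mem_sphere_zero_iff_norm]
  simpa using h.smul_eq_zero_of_mem_sphere this

theorem ne_smul (h : IsTangentLine z d) (t : ℝ) : z ≠ t • d := by
  rintro hzt
  have hmz : z + (-2 * t) • d ∈ sphere (0 : X) 1 := by
    rw [show z + (-2 * t) • d = -z by rw [hzt]; module]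
    simpa using h.mem_sphere
  have : t • d = 0 := by
    have := h.smul_eq_zero_of_mem_sphere hmz
    rw [mul_smul, _root_.smul_eq_zero] at this
    exact this.resolve_left (by norm_num)
  simpa [hzt, this] using h.norm_eq_one

theorem one_le_norm_add_smul (h : IsTangentLine z d) (t : ℝ) : 1 ≤ ‖z + t • d‖ := by
  by_contra! hlt
  obtain ⟨s, hs, hs1⟩ := exists_one_lt_norm_add_smul_sub_eq_one h.norm_eq_one hlt
  rw [add_sub_cancel_left, smul_smul] at hs1
  have hstd := h.smul_eq_zero_of_mem_sphere (mem_sphere_zero_iff_norm.mpr hs1)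
  rw [mul_smul, _root_.smul_eq_zero] at hstd
  rcases hstd with hs0 | htd
  · linarith
  · rw [htd, add_zero, h.norm_eq_one] at hlt
    exact lt_irrefl _ hlt

end IsTangentLine

theorem StrictlyConvexSphere.eq_of_apply_eq (hsc : StrictlyConvexSphere X) {φ : X →L[ℝ] ℝ}
    {c : ℝ} (hball : ∀ x ∈ ball (0 : X) 1, φ x < c) {w z : X} (hw : w ∈ sphere (0 : X) 1)
    (hz : z ∈ sphere (0 : X) 1) (hφw : φ w = c) (hφz : φ z = c) : w = z := by
  refine hsc (segment ℝ w z) (fun m hm => ?_) (convex_segment w z)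
    (left_mem_segment ℝ w z) (right_mem_segment ℝ w z)
  have hm_le : ‖m‖ ≤ 1 := mem_closedBall_zero_iff.mp <|
    (convex_closedBall (0 : X) 1).segment_subset (sphere_subset_closedBall hw)
      (sphere_subset_closedBall hz) hm
  have hφm : φ m = c := by
    obtain ⟨a, b, -, -, hab, rfl⟩ := hm
    rw [map_add, map_smul, map_smul, hφw, hφz, smul_eq_mul, smul_eq_mul, ← add_mul, hab,
      one_mul]
  refine mem_sphere_zero_iff_norm.mpr (hm_le.eq_of_not_lt fun hlt => ?_)
  exact (hball m (mem_ball_zero_iff.mpr hlt)).ne hφm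

/-- Hahn–Banach separation of the open unit ball from a tangent line yields a functional
vanishing on the direction of the line, and strict convexity makes `z` its unique maximiser. -/
theorem IsTangentLine.exists_strictPeak (hsc : StrictlyConvexSphere X) {z d : X}
    (h : IsTangentLine z d) :
    ∃ φ : X →L[ℝ] ℝ, φ d = 0 ∧ ∀ w ∈ sphere (0 : X) 1, w ≠ z → φ w < φ z := by
  have hdisj : Disjoint (ball (0 : X) 1) {w : X | ∃ t : ℝ, w = z + t • d} := by
    refine Set.disjoint_left.mpr ?_
    rintro _ hx ⟨t, rfl⟩
    exact (mem_ball_zero_iff.mp hx).not_ge (h.one_le_norm_add_smul t)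
  obtain ⟨φ, c, hball, hline⟩ := geometric_hahn_banach_open (convex_ball (0 : X) 1) isOpen_ball
    (convex_setOf_exists_eq_add_smul z d) hdisj
  have hφd : φ d = 0 := by
    by_contra hne
    have := hline (z + ((c - 1 - φ z) / φ d) • d) ⟨_, rfl⟩
    rw [map_add, map_smul, smul_eq_mul, div_mul_cancel₀ _ hne] at this
    linarith
  have hsphere : ∀ w ∈ sphere (0 : X) 1, φ w ≤ c := by
    have : closure (ball (0 : X) 1) ⊆ {x | φ x ≤ c} :=
      closure_minimal (fun x hx => (hball x hx).le) (isClosed_le φ.continuous continuous_const)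
    rw [closure_ball (0 : X) one_ne_zero] at this
    exact fun w hw => this (sphere_subset_closedBall hw)
  have hφz : φ z = c := le_antisymm (hsphere z h.mem_sphere) (hline z ⟨0, by simp⟩)
  refine ⟨φ, hφd, fun w hw hwz => hφz ▸ (hsphere w hw).lt_of_ne ?_⟩
  exact fun hφw => hwz (hsc.eq_of_apply_eq hball hw h.mem_sphere hφw hφz)

theorem exists_eq_smul_of_apply_eq_zero (hdim : Module.finrank ℝ X = 2) {φ : X →L[ℝ] ℝ}
    (hφ : φ ≠ 0) {d x : X} (hd : d ≠ 0) (hφd : φ d = 0) (hφx : φ x = 0) :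
    ∃ t : ℝ, x = t • d := by
  have : FiniteDimensional ℝ X := .of_finrank_pos (by omega)
  have hφ' : (φ : Module.Dual ℝ X) ≠ 0 := fun h0 => hφ (ContinuousLinearMap.coe_injective h0)
  have hker : Module.finrank ℝ (LinearMap.ker (φ : Module.Dual ℝ X)) = 1 := by
    have := Module.Dual.finrank_ker_add_one_of_ne_zero hφ'
    omega
  obtain ⟨t, ht⟩ := (finrank_eq_one_iff_of_nonzero' (⟨d, hφd⟩ : LinearMap.ker _)
    (fun h0 => hd (congrArg Subtype.val h0))).mp hker ⟨x, hφx⟩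
  exact ⟨t, by simpa using (congrArg Subtype.val ht).symm⟩

theorem pos_of_forall_mem_sphere_lt {φ : X →L[ℝ] ℝ} {z : X} (hz : z ∈ sphere (0 : X) 1)
    (hφ : ∀ w ∈ sphere (0 : X) 1, w ≠ z → φ w < φ z) : 0 < φ z := by
  have hz0 : -z ≠ z := by
    intro h
    have : (2 : ℝ) • z = 0 := by rw [two_smul]; nth_rewrite 1 [← h]; exact neg_add_cancel z
    simp [smul_eq_zero.mp this |>.resolve_left two_ne_zero] at hz
  have := hφ (-z) (by simpa using hz) hz0
  rw [map_neg] at this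
  linarith

/-- The line `p + ℝ d` is the level set `φ = φ p`, which meets the open ball at a multiple
of `z`. -/
theorem exists_ne_zero_add_smul_mem_sphere (hdim : Module.finrank ℝ X = 2) {φ : X →L[ℝ] ℝ}
    {z d p : X} (hz : z ∈ sphere (0 : X) 1) (hφ : ∀ w ∈ sphere (0 : X) 1, w ≠ z → φ w < φ z)
    (hd : d ≠ 0) (hφd : φ d = 0) (hp : p ∈ sphere (0 : X) 1) (hpz : p ≠ z) (hpz' : p ≠ -z) :
    ∃ t : ℝ, t ≠ 0 ∧ p + t • d ∈ sphere (0 : X) 1 := by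
  have hφz := pos_of_forall_mem_sphere_lt hz hφ
  have hlt : φ p < φ z := hφ p hp hpz
  have hgt : -φ z < φ p := by
    have := hφ (-p) (by simpa using hp) (fun h => hpz' (by rw [← h, neg_neg]))
    rw [map_neg] at this
    linarith
  set m := (φ p / φ z) • z
  have hm : ‖m‖ < 1 := by
    rw [norm_smul, mem_sphere_zero_iff_norm.mp hz, mul_one, Real.norm_eq_abs, abs_lt,
      lt_div_iff₀ hφz, div_lt_one hφz]
    constructor <;> linarith
  have hφm : φ (m - p) = 0 := by
    rw [map_sub, map_smul, smul_eq_mul, div_mul_cancel₀ _ hφz.ne', sub_self]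
  obtain ⟨s, hs⟩ := exists_eq_smul_of_apply_eq_zero hdim (fun h => by simp [h] at hφz) hd hφd hφm
  obtain ⟨r, hr, hr1⟩ := exists_one_lt_norm_add_smul_sub_eq_one
    (mem_sphere_zero_iff_norm.mp hp) hm
  have hs0 : s ≠ 0 := by
    rintro rfl
    rw [zero_smul, sub_eq_zero] at hs
    rw [hs, mem_sphere_zero_iff_norm.mp hp] at hm
    exact lt_irrefl _ hm
  refine ⟨r * s, mul_ne_zero (by positivity) hs0, ?_⟩
  rwa [mul_smul, ← hs, mem_sphere_zero_iff_norm]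

theorem exists_mem_sphere_apply_eq_of_lt {φ ψ : X →L[ℝ] ℝ} {u β z : X} {a : ℝ} (hu : u ≠ 0)
    (hφu : φ u = 0) (hβ : β ∈ sphere (0 : X) 1) (hz : z ∈ sphere (0 : X) 1) (hβa : φ β < a)
    (haz : a < φ z) (hψ : ψ β < ψ z) :
    ∃ r ∈ sphere (0 : X) 1, φ r = a ∧ ψ β < ψ r := by
  set θ := (a - φ β) / (φ z - φ β)
  have hθ0 : 0 < θ := div_pos (by linarith) (by linarith)
  have hθ1 : θ < 1 := (div_lt_one (by linarith)).mpr (by linarith)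
  set m := (1 - θ) • β + θ • z
  have hφm : φ m = a := by
    have : φ z - φ β ≠ 0 := by linarith
    simp only [m, θ, map_add, map_smul, smul_eq_mul]
    field_simp
    ring
  have hψm : ψ β < ψ m := by
    simp only [m, map_add, map_smul, smul_eq_mul]
    nlinarith
  have hm : ‖m‖ ≤ 1 := mem_closedBall_zero_iff.mp <| convex_closedBall (0 : X) 1
    (sphere_subset_closedBall hβ) (sphere_subset_closedBall hz) (by linarith) hθ0.le (by ring)
  rcases hm.eq_or_lt with hm1 | hm1
  · exact ⟨m, mem_sphere_zero_iff_norm.mpr hm1, hφm, hψm⟩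
  obtain ⟨e, he, hφe, hψe⟩ : ∃ e : X, e ≠ 0 ∧ φ e = 0 ∧ 0 ≤ ψ e := by
    rcases le_total 0 (ψ u) with h | h
    · exact ⟨u, hu, hφu, h⟩
    · exact ⟨-u, neg_ne_zero.mpr hu, by simp [hφu], by simpa using h⟩
  obtain ⟨s, hs, hs1⟩ := exists_pos_norm_add_smul_eq_one hm1 he
  refine ⟨m + s • e, mem_sphere_zero_iff_norm.mpr hs1, ?_, ?_⟩
  · simp [hφm, hφe]
  · simp only [map_add, map_smul, smul_eq_mul]
    nlinarith

/-- Let `φ`, `ψ` peak at `z` and vanish on `u`, `v`. If a maximiser `p` of `ψ` on `W` is not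
`z`, its `v`-chord partner in `W` has the same `ψ`-value but another `φ`-value; moving the one
with smaller `φ`-value towards `z` and back to the sphere along `u` stays in `W` and increases
`ψ`. -/
theorem IsTangentLine.mem_of_isCompact (hdim : Module.finrank ℝ X = 2)
    (hsc : StrictlyConvexSphere X) {u v z : X} (huv : LinearIndependent ℝ ![u, v])
    (hzu : IsTangentLine z u) (hzv : IsTangentLine z v) {W : Set X} (hW : IsCompact W)
    (hWS : W ⊆ sphere (0 : X) 1)
    (hWu : ∀ p ∈ W, ∀ t : ℝ, p + t • u ∈ sphere (0 : X) 1 → p + t • u ∈ W)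
    (hWv : ∀ p ∈ W, ∀ t : ℝ, p + t • v ∈ sphere (0 : X) 1 → p + t • v ∈ W)
    {q : X} (hq : q ∈ W) (hqz : q ≠ -z) : z ∈ W := by
  have hu0 : u ≠ 0 := by simpa using huv.ne_zero 0
  obtain ⟨hv0, hvu⟩ := linearIndependent_fin2.mp huv
  simp only [Matrix.cons_val_one, Matrix.cons_val_zero] at hv0 hvu
  obtain ⟨φ, hφu, hφ⟩ := hzu.exists_strictPeak hsc
  obtain ⟨ψ, hψv, hψ⟩ := hzv.exists_strictPeak hsc
  have hφ0 : φ ≠ 0 := fun h => by simpa [h] using pos_of_forall_mem_sphere_lt hzu.mem_sphere hφ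
  have hφv : φ v ≠ 0 := by
    intro h
    obtain ⟨t, ht⟩ := exists_eq_smul_of_apply_eq_zero hdim hφ0 hu0 hφu h
    have ht0 : t ≠ 0 := by rintro rfl; simp [ht] at hv0
    exact hvu t⁻¹ (by rw [ht, smul_smul, inv_mul_cancel₀ ht0, one_smul])
  obtain ⟨p, hp, hmax⟩ := hW.exists_isMaxOn ⟨q, hq⟩ ψ.continuous.continuousOn
  by_contra hzW
  have hWz : ∀ w ∈ W, w ≠ z := fun w hw hwz => hzW (hwz ▸ hw)
  have hpz' : p ≠ -z := by
    have hq' := hψ (-q) (by simpa using hWS hq) (fun h => hqz (by rw [← h, neg_neg]))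
    have hqp : ψ q ≤ ψ p := hmax hq
    rintro rfl
    simp only [map_neg] at hq' hqp
    linarith
  obtain ⟨t, ht0, ht⟩ := exists_ne_zero_add_smul_mem_sphere hdim hzv.mem_sphere hψ hv0 hψv
    (hWS hp) (hWz p hp) hpz'
  have hψ_maximal : ∀ α ∈ W, ∀ β ∈ W, ψ β = ψ p → ¬ φ β < φ α := by
    intro α hα β hβ hψβ hlt
    obtain ⟨r, hr, hφr, hψr⟩ := exists_mem_sphere_apply_eq_of_lt hu0 hφu (hWS hβ)
      hzv.mem_sphere hlt (hφ α (hWS hα) (hWz α hα)) (hψ β (hWS hβ) (hWz β hβ))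
    obtain ⟨s, hs⟩ := exists_eq_smul_of_apply_eq_zero hdim hφ0 hu0 hφu (x := r - α)
      (by rw [map_sub, hφr, sub_self])
    have hrW : r ∈ W := by
      rw [sub_eq_iff_eq_add'] at hs
      exact hs ▸ hWu α hα s (hs ▸ hr)
    exact (hmax hrW).not_gt (hψβ ▸ hψr)
  have hψt : ψ (p + t • v) = ψ p := by simp [hψv]
  have hφt : φ (p + t • v) ≠ φ p := by simp [ht0, hφv]
  rcases hφt.lt_or_gt with h | h
  · exact hψ_maximal p hp _ (hWv p hp t ht) hψt h
  · exact hψ_maximal _ (hWv p hp t ht) p hp rfl h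

theorem IsTangentLine.apply_eq_of_chord_invariant (hdim : Module.finrank ℝ X = 2)
    (hsc : StrictlyConvexSphere X) {u v z : X} (huv : LinearIndependent ℝ ![u, v])
    (hzu : IsTangentLine z u) (hzv : IsTangentLine z v) {Y : Type*} [TopologicalSpace Y]
    [T2Space Y] {g : sphere (0 : X) 1 → Y} (hg : Continuous g)
    (hgu : ∀ (p : sphere (0 : X) 1) (t : ℝ) (h : (p : X) + t • u ∈ sphere (0 : X) 1),
      g ⟨_, h⟩ = g p)
    (hgv : ∀ (p : sphere (0 : X) 1) (t : ℝ) (h : (p : X) + t • v ∈ sphere (0 : X) 1),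
      g ⟨_, h⟩ = g p)
    (p q : sphere (0 : X) 1) : g p = g q := by
  have : FiniteDimensional ℝ X := .of_finrank_pos (by omega)
  have hchord : ∀ d : X, (∀ (p : sphere (0 : X) 1) (t : ℝ)
      (h : (p : X) + t • d ∈ sphere (0 : X) 1), g ⟨_, h⟩ = g p) → ∀ p : sphere (0 : X) 1,
      ∀ w ∈ Subtype.val '' {q | g q = g p}, ∀ t : ℝ, w + t • d ∈ sphere (0 : X) 1 →
        w + t • d ∈ Subtype.val '' {q | g q = g p} := by
    rintro d hgd p _ ⟨w, hw, rfl⟩ t ht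
    exact ⟨⟨_, ht⟩, (hgd w t ht).trans hw, rfl⟩
  have hz_eq : ∀ z' : X, (hz'u : IsTangentLine z' u) → IsTangentLine z' v →
      ∀ p : sphere (0 : X) 1, (p : X) ≠ -z' → g ⟨z', hz'u.mem_sphere⟩ = g p := by
    intro z' hz'u hz'v p hp
    obtain ⟨w, hw, hwz⟩ := hz'u.mem_of_isCompact hdim hsc huv hz'v
      ((isClosed_eq hg continuous_const).isCompact.image continuous_subtype_val)
      (image_subset_iff.mpr fun q _ => q.2) (hchord u hgu p) (hchord v hgv p) ⟨p, rfl, rfl⟩ hp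
    rwa [show w = ⟨z', hz'u.mem_sphere⟩ from Subtype.ext hwz] at hw
  have hu0 : u ≠ 0 := by simpa using huv.ne_zero 0
  set u₁ : sphere (0 : X) 1 := ⟨‖u‖⁻¹ • u, by simp [norm_smul, hu0]⟩
  have hu₁ : ∀ p : sphere (0 : X) 1, g p = g u₁ := by
    intro p
    by_cases hp : (p : X) = z
    · rw [show p = ⟨z, hzu.mem_sphere⟩ from Subtype.ext hp]
      exact hz_eq z hzu hzv u₁ (hzu.neg.ne_smul _).symm
    · rw [← hz_eq (-z) hzu.neg hzv.neg p (by rwa [neg_neg]),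
        hz_eq (-z) hzu.neg hzv.neg u₁ (by rw [neg_neg]; exact (hzu.ne_smul _).symm)]
  rw [hu₁ p, hu₁ q]

def IsSpecialPointFor (Y : Type*) [NormedAddCommGroup Y] [NormedSpace ℝ Y]
    (x : sphere (0 : X) 1) : Prop :=
  ∀ f : sphere (0 : X) 1 → sphere (0 : Y) 1, Isometry f → Function.Surjective f →
    ∀ y z : sphere (0 : X) 1, (y : X) - (z : X) = ‖(y : X) - (z : X)‖ • (x : X) →
      (f y : Y) - (f z : Y) = ‖(y : X) - (z : X)‖ • (f x : Y)

namespace IsSpecialPointFor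

variable {Y Z : Type*} [NormedAddCommGroup Y] [NormedSpace ℝ Y] [NormedAddCommGroup Z]
  [NormedSpace ℝ Z] {x : sphere (0 : X) 1}

theorem map_sub_eq_smul (h : IsSpecialPointFor Y x) {f : sphere (0 : X) 1 → sphere (0 : Y) 1}
    (hf : Isometry f) (hfs : Function.Surjective f) {p q : sphere (0 : X) 1} {t : ℝ}
    (hpq : (p : X) - q = t • (x : X)) : (f p : Y) - f q = t • (f x : Y) := by
  have hx : ‖(x : X)‖ = 1 := mem_sphere_zero_iff_norm.mp x.2
  have key : ∀ p q : sphere (0 : X) 1, ∀ t : ℝ, 0 ≤ t → (p : X) - q = t • (x : X) →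
      (f p : Y) - f q = t • (f x : Y) := by
    intro p q t ht hpq
    have hnorm : ‖(p : X) - q‖ = t := by rw [hpq, norm_smul, hx, mul_one, Real.norm_of_nonneg ht]
    exact hnorm ▸ h f hf hfs p q (hnorm ▸ hpq)
  rcases le_total 0 t with ht | ht
  · exact key p q t ht hpq
  · have := key q p (-t) (by linarith) (by rw [← neg_sub, hpq, neg_smul])
    rw [← neg_sub, this, neg_smul, neg_neg]

theorem of_linearIsometryEquiv (e : Y ≃ₗᵢ[ℝ] Z) (h : IsSpecialPointFor Z x) :
    IsSpecialPointFor Y x := by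
  intro f hf hfs y w hyw
  let g : sphere (0 : X) 1 → sphere (0 : Z) 1 := fun p => ⟨e (f p), by simp⟩
  have hg : Isometry g := fun p q => (e.isometry.comp (isometry_subtype_coe.comp hf)) p q
  have hgs : Function.Surjective g := by
    intro r
    obtain ⟨p, hp⟩ := hfs ⟨e.symm r, by simp⟩
    exact ⟨p, Subtype.ext (by simp [g, hp])⟩
  apply e.injective
  simpa [g] using h g hg hgs y w hyw

end IsSpecialPointFor

theorem IsTangentLine.isSpecialPointFor (hdim : Module.finrank ℝ X = 2)
    (hsc : StrictlyConvexSphere X) {u v : sphere (0 : X) 1} {z : X}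
    (huv : LinearIndependent ℝ ![(u : X), (v : X)]) (hzu : IsTangentLine z u)
    (hzv : IsTangentLine z v) {Y : Type*} [NormedAddCommGroup Y] [NormedSpace ℝ Y]
    (hu : IsSpecialPointFor Y u) (hv : IsSpecialPointFor Y v) :
    IsSpecialPointFor Y ⟨z, hzu.mem_sphere⟩ := by
  intro f hf hfs y w hyw
  have : FiniteDimensional ℝ X := .of_finrank_pos (by omega)
  let b := basisOfLinearIndependentOfCardEqFinrank huv (by simp [hdim])
  have hb : ⇑b = ![(u : X), (v : X)] := coe_basisOfLinearIndependentOfCardEqFinrank _ _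
  let A : X →ₗ[ℝ] Y := b.constr ℝ ![(f u : Y), (f v : Y)]
  have hAu : A u = f u := by rw [show (u : X) = b 0 by simp [hb], b.constr_basis]; rfl
  have hAv : A v = f v := by rw [show (v : X) = b 1 by simp [hb], b.constr_basis]; rfl
  let g : sphere (0 : X) 1 → Y := fun p => (f p : Y) - A p
  have hchord : ∀ x : sphere (0 : X) 1, IsSpecialPointFor Y x → A x = f x →
      ∀ (p : sphere (0 : X) 1) (t : ℝ) (h : (p : X) + t • (x : X) ∈ sphere (0 : X) 1),
        g ⟨_, h⟩ = g p := by
    intro x hx hAx p t h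
    have := hx.map_sub_eq_smul hf hfs (p := ⟨_, h⟩) (q := p) (t := t) (by simp)
    simp only [g, map_add, map_smul, hAx, ← this]
    abel
  have hg : Continuous g := (continuous_subtype_val.comp hf.continuous).sub
    (A.continuous_of_finiteDimensional.comp continuous_subtype_val)
  have hfA : ∀ p, (f p : Y) = A p := fun p => sub_eq_zero.mp <|
    (hzu.apply_eq_of_chord_invariant hdim hsc huv hzv hg (hchord u hu hAu) (hchord v hv hAv)
      p u).trans (sub_eq_zero.mpr hAu.symm)
  rw [hfA, hfA, hfA, ← map_sub, ← map_smul, ← hyw]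

theorem SingularPair.exists_isTangentLine {u v : X} (huv : LinearIndependent ℝ ![u, v])
    (h : SingularPair u v) : ∃ z : X, IsTangentLine z u ∧ IsTangentLine z v := by
  rcases h with ⟨e, he₁, he₂⟩ | ⟨z, -, hzu, hzv⟩
  · obtain ⟨-, hvu⟩ := linearIndependent_fin2.mp huv
    simp only [Matrix.cons_val_one, Matrix.cons_val_zero] at hvu
    simp only [Set.mem_insert_iff, Set.mem_singleton_iff] at he₁ he₂
    rcases he₁ with rfl | rfl <;> rcases he₂ with rfl | h
    · exact absurd (one_smul ℝ e) (hvu 1)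
    · exact absurd (by rw [h, neg_smul, one_smul]) (hvu (-1))
    · exact absurd (by rw [neg_smul, one_smul, neg_neg]) (hvu (-1))
    · exact absurd (by rw [one_smul, neg_injective h]) (hvu 1)
  · exact ⟨z, hzu, hzv⟩

theorem IsTangentLine.not_singularPair (hdim : Module.finrank ℝ X = 2)
    (hsc : StrictlyConvexSphere X) {u z : X} (hu : u ∈ sphere (0 : X) 1)
    (hzu : IsTangentLine z u) : ¬ SingularPair u z := by
  rintro (⟨e, he₁, he₂⟩ | ⟨z', -, hz'u : IsTangentLine z' u, hz'z : IsTangentLine z' z⟩)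
  · simp only [Set.mem_insert_iff, Set.mem_singleton_iff] at he₁ he₂
    rcases he₁ with rfl | rfl <;> rcases he₂ with h | h
    · exact hzu.ne_smul 1 (by rw [one_smul, h])
    · exact hzu.ne_smul (-1) (by rw [neg_smul, one_smul, h, neg_neg])
    · exact hzu.ne_smul (-1) (by rw [neg_smul, one_smul, h])
    · exact hzu.ne_smul 1 (by rw [one_smul, neg_injective h])
  · obtain ⟨φ, hφu, hφ⟩ := hzu.exists_strictPeak hsc
    have hu0 : u ≠ 0 := ne_zero_of_mem_unit_sphere ⟨u, hu⟩
    obtain ⟨t, ht0, ht⟩ := exists_ne_zero_add_smul_mem_sphere hdim hzu.mem_sphere hφ hu0 hφu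
      hz'u.mem_sphere (fun h => hz'z.ne_smul 1 (by rw [one_smul, h]))
      (fun h => hz'z.ne_smul (-1) (by rw [neg_smul, one_smul, h]))
    exact ht0 ((smul_eq_zero.mp (hz'u.smul_eq_zero_of_mem_sphere ht)).resolve_right hu0)

end

universe u v w

theorem FiniteDimensional.of_isCompact_sphere {Y : Type*} [NormedAddCommGroup Y]
    [NormedSpace ℝ Y] (h : IsCompact (sphere (0 : Y) 1)) : FiniteDimensional ℝ Y := by
  refine .of_isCompact_closedBall₀ ℝ one_pos <|
    (((isCompact_Icc (a := (0 : ℝ)) (b := 1)).prod h).image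
      (continuous_fst.smul continuous_snd)).insert 0 |>.of_isClosed_subset isClosed_closedBall ?_
  intro y hy
  rcases eq_or_ne y 0 with rfl | hy0
  · exact Set.mem_insert _ _
  · refine Or.inr ⟨(‖y‖, ‖y‖⁻¹ • y), ⟨⟨norm_nonneg y, mem_closedBall_zero_iff.mp hy⟩, ?_⟩, ?_⟩
    · simp [norm_smul, hy0]
    · simp [smul_smul, hy0]

/-- `Shrink α` without the algebraic instances transferred to it, so that a normed structure
can be induced on it without creating instance diamonds. -/
def BareShrink (α : Type w) [Small.{v} α] : Type v := Shrink.{v} α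

theorem FiniteDimensional.exists_linearIsometryEquiv_of_small (Y : Type w)
    [NormedAddCommGroup Y] [NormedSpace ℝ Y] [FiniteDimensional ℝ Y] :
    ∃ (Z : Type v) (_ : NormedAddCommGroup Z) (_ : NormedSpace ℝ Z) (_ : CompleteSpace Z),
      Nonempty (Y ≃ₗᵢ[ℝ] Z) := by
  have : Small.{v} Y := small_of_injective (Module.finBasis ℝ Y).equivFun.injective
  let e : BareShrink.{v} Y ≃ Y := (equivShrink Y).symm
  let _ : AddCommGroup (BareShrink.{v} Y) := e.addCommGroup
  let _ : Module ℝ (BareShrink.{v} Y) := e.module ℝ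
  let E : BareShrink.{v} Y ≃ₗ[ℝ] Y := e.linearEquiv ℝ
  let _ : NormedAddCommGroup (BareShrink.{v} Y) := .induced _ Y E E.injective
  let _ : NormedSpace ℝ (BareShrink.{v} Y) := .induced ℝ _ Y E
  have : FiniteDimensional ℝ (BareShrink.{v} Y) := E.symm.finiteDimensional
  exact ⟨BareShrink.{v} Y, _, _, FiniteDimensional.complete ℝ _,
    ⟨⟨E.symm, fun y => congrArg norm (E.apply_symm_apply y)⟩⟩⟩

/-- `S_Y` is a continuous image of the compact `S_X`, so `Y` is finite-dimensional and has a
linearly isometric copy in every universe. -/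
theorem IsSpecialPoint.liftUniverse {X : Type u} [NormedAddCommGroup X] [NormedSpace ℝ X]
    [FiniteDimensional ℝ X] {x : sphere (0 : X) 1} (h : IsSpecialPoint.{u, v} x) :
    IsSpecialPoint.{u, w} x := by
  intro Y _ _ _ f hf hfs
  have : FiniteDimensional ℝ Y := by
    refine .of_isCompact_sphere ?_
    rw [← Subtype.range_coe (s := sphere (0 : Y) 1), ← hfs.range_comp]
    exact isCompact_range (continuous_subtype_val.comp hf.continuous)
  obtain ⟨Z, _, _, _, ⟨e⟩⟩ := FiniteDimensional.exists_linearIsometryEquiv_of_small.{v} Y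
  exact IsSpecialPointFor.of_linearIsometryEquiv e (h Z) f hf hfs

theorem exists_regular_pair_of_special_points_general
    {X : Type*} [NormedAddCommGroup X] [NormedSpace ℝ X]
    (hdim : Module.finrank ℝ X = 2)
    (hsc : StrictlyConvexSphere X)
    (u v : sphere (0 : X) 1)
    (huv : LinearIndependent ℝ ![(u : X), (v : X)])
    (hu : IsSpecialPoint u) (hv : IsSpecialPoint v) :
    ∃ x y : sphere (0 : X) 1, IsSpecialPoint x ∧ IsSpecialPoint y ∧
      ¬ SingularPair (x : X) (y : X) := by
  have : FiniteDimensional ℝ X := .of_finrank_pos (by omega)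
  by_cases huv_singular : SingularPair (u : X) v
  · obtain ⟨z, hzu, hzv⟩ := huv_singular.exists_isTangentLine huv
    refine ⟨u, ⟨z, hzu.mem_sphere⟩, hu.liftUniverse, fun Y _ _ _ => ?_,
      hzu.not_singularPair hdim hsc u.2⟩
    exact hzu.isSpecialPointFor hdim hsc huv hzv (hu.liftUniverse Y) (hv.liftUniverse Y)
  · exact ⟨u, v, hu.liftUniverse, hv.liftUniverse, huv_singular⟩

/-- If the unit sphere of a strictly convex 2-dimensional real Banach space contains two
linearly independent special points, then it contains two special points forming a
regular pair. -/
theorem exists_regular_pair_of_special_points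
    {X : Type*} [NormedAddCommGroup X] [NormedSpace ℝ X] [CompleteSpace X]
    (hdim : Module.finrank ℝ X = 2)
    (hsc : StrictlyConvexSphere X)
    (u v : sphere (0 : X) 1)
    (huv : LinearIndependent ℝ ![(u : X), (v : X)])
    (hu : IsSpecialPoint u) (hv : IsSpecialPoint v) :
    ∃ x y : sphere (0 : X) 1, IsSpecialPoint x ∧ IsSpecialPoint y ∧
      ¬ SingularPair (x : X) (y : X) :=
  exists_regular_pair_of_special_points_general hdim hsc u v huv hu hv
end
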